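/- arXiv:1911.10646 — 4 statements merged into one kernel-verified Lean document; each statement's English description precedes it below -/
import Mathlib

section
/- Let $V$ be a vector space over a field $K$ and let $v_1, \dots, v_u \in V$ with $u \geq 2$. Fix $j$ with $2 \leq j \leq u$. Then there is at most one scalar $\lambda \in K$ such that $\dim \operatorname{span}\{v_2, \dots, v_{j-1}, v_j + \lambda v_1, v_{j+1}, \dots, v_u\} < \dim \operatorname{span}\{v_2, \dots, v_u\}$. -/
/-!
Write `W` for the span of the vectors other than `v j`. The span can only lose dimension when
`v j` is replaced by `v j + λ • v 1` if `v j ∉ W` and `v j + λ • v 1 ∈ W`. Two distinct such `λ`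
would put their difference times `v 1`, hence `v 1`, hence `v j` itself, into `W`.
-/

open Function Module Submodule

namespace Set

variable {α β : Type*} [DecidableEq α]

theorem image_update_of_mem (f : α → β) {s : Set α} {a : α} (ha : a ∈ s) (b : β) :
    update f a b '' s = insert b (f '' (s \ {a})) := by
  conv_lhs => rw [← insert_sdiff_self_of_mem ha]
  rw [image_insert_eq, update_self]
  congr 1
  exact image_congr fun i hi => update_of_ne (by simpa using hi.2) b f

theorem image_update_of_notMem (f : α → β) {s : Set α} {a : α} (ha : a ∉ s) (b : β) :
    update f a b '' s = f '' s :=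
  image_congr fun _ hi => update_of_ne (ne_of_mem_of_not_mem hi ha) b f

end Set

section

variable {K V : Type*} [DivisionRing K] [AddCommGroup V] [Module K V]

theorem finrank_span_insert_le (s : Set V) (b : V) [FiniteDimensional K (span K s)] :
    finrank K (span K (insert b s)) ≤ finrank K (span K s) + 1 := by
  rw [span_insert, add_comm]
  calc finrank K ↥((K ∙ b) ⊔ span K s)
      ≤ finrank K (K ∙ b) + finrank K (span K s) := finrank_add_le_finrank_add_finrank _ _
    _ ≤ 1 + finrank K (span K s) := by
      gcongr
      simpa using finrank_span_le_card (R := K) ({b} : Set V)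

theorem mem_span_and_notMem_span_of_finrank_span_insert_lt {s : Set V} {a b : V}
    (h : finrank K (span K (insert a s)) < finrank K (span K (insert b s))) :
    a ∈ span K s ∧ b ∉ span K s := by
  have : FiniteDimensional K (span K (insert b s)) := Module.finite_of_finrank_pos (by omega)
  have : FiniteDimensional K (span K s) :=
    finiteDimensional_of_le (span_mono (Set.subset_insert b s))
  have : FiniteDimensional K (span K (insert a s)) := by rw [span_insert]; infer_instance
  constructor
  · by_contra ha
    have hlt : span K s < span K (insert a s) :=
      (span_mono (Set.subset_insert a s)).lt_of_not_ge
        fun hle => ha (hle (subset_span (Set.mem_insert a s)))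
    have := finrank_lt_finrank_of_lt hlt
    have := finrank_span_insert_le (K := K) s b
    omega
  · intro hb
    rw [span_insert_eq_span hb] at h
    exact h.not_ge (finrank_mono (span_mono (Set.subset_insert a s)))

theorem eq_of_add_smul_mem_of_add_smul_mem {W : Submodule K V} {b w : V} (hb : b ∉ W)
    {μ₁ μ₂ : K} (h₁ : b + μ₁ • w ∈ W) (h₂ : b + μ₂ • w ∈ W) : μ₁ = μ₂ := by
  by_contra hne
  have hw : w ∈ W := by
    rw [← W.smul_mem_iff (sub_ne_zero.mpr hne), sub_smul]
    simpa using W.sub_mem h₁ h₂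
  exact hb (by simpa using W.sub_mem h₁ (W.smul_mem μ₁ hw))

theorem eq_of_finrank_span_insert_add_smul_lt {s : Set V} {b w : V} {μ₁ μ₂ : K}
    (h₁ : finrank K (span K (insert (b + μ₁ • w) s)) < finrank K (span K (insert b s)))
    (h₂ : finrank K (span K (insert (b + μ₂ • w) s)) < finrank K (span K (insert b s))) :
    μ₁ = μ₂ :=
  have ⟨hmem, hb⟩ := mem_span_and_notMem_span_of_finrank_span_insert_lt h₁
  eq_of_add_smul_mem_of_add_smul_mem hb hmem
    (mem_span_and_notMem_span_of_finrank_span_insert_lt h₂).1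

theorem eq_of_finrank_span_image_update_lt {ι : Type*} [DecidableEq ι] (v : ι → V) (I : Set ι)
    (j : ι) (w : V) {μ₁ μ₂ : K}
    (h₁ : finrank K (span K (update v j (v j + μ₁ • w) '' I)) < finrank K (span K (v '' I)))
    (h₂ : finrank K (span K (update v j (v j + μ₂ • w) '' I)) < finrank K (span K (v '' I))) :
    μ₁ = μ₂ := by
  by_cases hj : j ∈ I
  · have hI : v '' I = insert (v j) (v '' (I \ {j})) := by
      simpa using Set.image_update_of_mem v hj (v j)
    rw [Set.image_update_of_mem v hj, hI] at h₁ h₂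
    exact eq_of_finrank_span_insert_add_smul_lt h₁ h₂
  · rw [Set.image_update_of_notMem v hj] at h₁
    exact absurd h₁ (lt_irrefl _)

end

theorem span_dim_drop_unique_general {K V : Type*} [Field K] [AddCommGroup V] [Module K V]
    (u : ℕ) (v : ℕ → V) (j : ℕ)
    (lam₁ lam₂ : K)
    (h1 : Module.finrank K ↥(Submodule.span K
        ((fun i => if i = j then v j + lam₁ • v 1 else v i) '' Set.Icc 2 u)) <
      Module.finrank K ↥(Submodule.span K (v '' Set.Icc 2 u)))
    (h2 : Module.finrank K ↥(Submodule.span K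
        ((fun i => if i = j then v j + lam₂ • v 1 else v i) '' Set.Icc 2 u)) <
      Module.finrank K ↥(Submodule.span K (v '' Set.Icc 2 u))) :
    lam₁ = lam₂ := by
  have hupdate (lam : K) :
      (fun i => if i = j then v j + lam • v 1 else v i) = update v j (v j + lam • v 1) :=
    funext fun i => (update_apply v j _ i).symm
  rw [hupdate] at h1 h2
  exact eq_of_finrank_span_image_update_lt v _ j (v 1) h1 h2

/-- At most one scalar `λ` makes the dimension of the span drop when
`v j` is replaced by `v j + λ • v 1`. -/
theorem span_dim_drop_unique {K V : Type*} [Field K] [AddCommGroup V] [Module K V]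
    (u : ℕ) (hu : 2 ≤ u) (v : ℕ → V) (j : ℕ) (hj1 : 2 ≤ j) (hj2 : j ≤ u)
    (lam₁ lam₂ : K)
    (h1 : Module.finrank K ↥(Submodule.span K
        ((fun i => if i = j then v j + lam₁ • v 1 else v i) '' Set.Icc 2 u)) <
      Module.finrank K ↥(Submodule.span K (v '' Set.Icc 2 u)))
    (h2 : Module.finrank K ↥(Submodule.span K
        ((fun i => if i = j then v j + lam₂ • v 1 else v i) '' Set.Icc 2 u)) <
      Module.finrank K ↥(Submodule.span K (v '' Set.Icc 2 u))) :
    lam₁ = lam₂ :=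
  span_dim_drop_unique_general u v j lam₁ lam₂ h1 h2
end

section
/- Let $R$ be a Noetherian ring and $I \subsetneq R$ an ideal with $\operatorname{grade}(I) = d$. Then there are only finitely many prime ideals $P \supseteq I$ with $\operatorname{depth} R_P = d$. -/
open CategoryTheory

universe u

/-- The depth of a module over a local ring: the supremum of lengths of
regular sequences on `M` contained in the maximal ideal. -/
noncomputable def moduleDepth (R M : Type*) [CommRing R] [IsLocalRing R]
    [AddCommGroup M] [Module R M] : ℕ∞ :=
  sSup {n : ℕ∞ | ∃ rs : List R, (rs.length : ℕ∞) = n ∧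
    (∀ r ∈ rs, r ∈ IsLocalRing.maximalIdeal R) ∧ RingTheory.Sequence.IsRegular M rs}

/-- The depth of the localization of `R` at a prime `P`. -/
noncomputable def primeDepth (R : Type*) [CommRing R] (P : Ideal R) (hP : P.IsPrime) :
    ℕ∞ :=
  letI := hP
  moduleDepth (Localization.AtPrime P) (Localization.AtPrime P)

/-- The grade of an ideal `I`: the infimum of the `i` such that `Ext^i(R/I, R) ≠ 0`. -/
noncomputable def idealGrade (R : Type u) [CommRing R] (I : Ideal R) : ℕ∞ :=
  sInf {n : ℕ∞ | ∃ i : ℕ, (i : ℕ∞) = n ∧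
    ¬ Subsingleton (((Ext R (ModuleCat.{u} R) i).obj
      (Opposite.op (ModuleCat.of R (R ⧸ I)))).obj (ModuleCat.of R R))}

/-! By Rees' theorem, `grade I = d` provides an `R`-regular sequence `x₁, …, x_d` in `I`. For a
prime `P ⊇ I` with `depth R_P = d`, the images of the `xᵢ` form a maximal regular sequence in the
maximal ideal of `R_P`, so that maximal ideal consists of zero divisors on `R_P ⧸ (x)` and is
therefore one of its associated primes. Hence `P` is an associated prime of `R ⧸ (x)`, and a
finite module over a Noetherian ring has only finitely many associated primes. -/

section Ext

variable {R : Type*} [Ring R] {C : Type*} [Category* C] [Abelian C] [Linear R C]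
  [EnoughProjectives C] [HasExt C]

/-- The `Ext` of `idealGrade` is the left-derived-functor one, while Mathlib's Rees theorem
(`ModuleCat.exists_isRegular_of_exists_subsingleton_ext`) is about `Abelian.Ext`; both are
computed by the same projective resolution, so vanishing transfers. -/
lemma subsingleton_abelianExt_of_subsingleton_ext (X Y : C) (n : ℕ)
    (h : Subsingleton (((Ext R C n).obj (Opposite.op X)).obj Y)) :
    Subsingleton (Abelian.Ext X Y n) := by
  let P := ProjectiveResolution.of X
  have hexact : (P.complex.linearYonedaObj R Y).ExactAt n := by
    rw [HomologicalComplex.exactAt_iff_isZero_homology]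
    exact Limits.IsZero.of_iso (ModuleCat.isZero_of_subsingleton _) (P.isoExt n Y).symm
  refine subsingleton_of_forall_eq 0 fun α => ?_
  obtain ⟨f, hf, rfl⟩ := P.extMk_surjective α (n + 1) rfl
  cases n with
  | zero =>
    rw [HomologicalComplex.exactAt_iff' _ 0 0 1 (by simp) (by simp),
      ShortComplex.moduleCat_exact_iff] at hexact
    obtain ⟨g, hg⟩ := hexact f hf
    obtain rfl : f = 0 := by
      rw [← hg]
      show P.complex.d 0 0 ≫ g = 0
      rw [P.complex.shape 0 0 (by simp)]
      exact Limits.zero_comp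
    exact P.extMk_zero 1 rfl
  | succ p =>
    rw [HomologicalComplex.exactAt_iff' _ p (p + 1) (p + 2) (by simp) (by simp),
      ShortComplex.moduleCat_exact_iff] at hexact
    obtain ⟨g, hg⟩ := hexact f hf
    exact (P.extMk_eq_zero_iff f _ rfl hf p rfl).mpr ⟨g, hg⟩

end Ext

open RingTheory.Sequence IsLocalRing

section Grade

variable {R : Type u} [CommRing R] {I : Ideal R}

lemma subsingleton_ext_of_lt_idealGrade {i : ℕ} (hi : (i : ℕ∞) < idealGrade R I) :
    Subsingleton (((Ext R (ModuleCat.{u} R) i).obj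
      (Opposite.op (ModuleCat.of R (R ⧸ I)))).obj (ModuleCat.of R R)) := by
  by_contra h
  exact (sInf_le ⟨i, rfl, h⟩ : idealGrade R I ≤ i).not_gt hi

theorem exists_isRegular_of_le_idealGrade [IsNoetherianRing R] (hI : I ≠ ⊤) {n : ℕ}
    (hn : (n : ℕ∞) ≤ idealGrade R I) :
    ∃ rs : List R, rs.length = n ∧ (∀ r ∈ rs, r ∈ I) ∧ IsRegular R rs := by
  have smul_lt : I • (⊤ : Submodule R (ModuleCat.of R R)) < ⊤ := by
    simpa [Ideal.smul_eq_mul] using hI.lt_top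
  have supp : Module.support R (ModuleCat.of R (R ⧸ I)) = PrimeSpectrum.zeroLocus I := by
    rw [Module.support_eq_zeroLocus, Ideal.annihilator_quotient]
  exact ModuleCat.exists_isRegular_of_exists_subsingleton_ext I n (ModuleCat.of R R) smul_lt _ supp
    fun i hi => subsingleton_abelianExt_of_subsingleton_ext _ _ i
      (subsingleton_ext_of_lt_idealGrade ((Nat.cast_lt.mpr hi).trans_le hn))

end Grade

lemma exists_le_mem_associatedPrimes_of_forall_not_isSMulRegular {R M : Type*} [CommRing R]
    [IsNoetherianRing R] [AddCommGroup M] [Module R M] [Module.Finite R M] {J : Ideal R}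
    (hJ : ∀ r ∈ J, ¬ IsSMulRegular M r) :
    ∃ p ∈ associatedPrimes R M, J ≤ p :=
  (J.subset_union_prime_finite (associatedPrimes.finite R M) (f := id) 0 0
    fun _ hp _ _ => hp.isPrime).mp <| by
      show (J : Set R) ⊆ ⋃ p ∈ associatedPrimes R M, (p : Set R)
      rw [biUnion_associatedPrimes_eq_compl_regular R M]
      exact hJ

section LocalRing

variable {A M : Type*} [CommRing A] [IsLocalRing A] [AddCommGroup M] [Module A M]

lemma RingTheory.Sequence.IsRegular.mem_maximalIdeal {rs : List A} (h : IsRegular M rs) :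
    ∀ r ∈ rs, r ∈ maximalIdeal A := by
  intro r hr
  by_contra hm
  have htop : Ideal.ofList rs = ⊤ :=
    Ideal.eq_top_of_isUnit_mem _ (Ideal.subset_span hr) (notMem_maximalIdeal.mp hm)
  exact h.top_ne_smul (by rw [htop, Submodule.top_smul])

variable [Module.Finite A M]

lemma not_isSMulRegular_of_length_eq_moduleDepth {rs : List A} (h : IsRegular M rs)
    (hlen : (rs.length : ℕ∞) = moduleDepth A M) {y : A} (hy : y ∈ maximalIdeal A) :
    ¬ IsSMulRegular (M ⧸ Ideal.ofList rs • (⊤ : Submodule A M)) y := by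
  intro hreg
  have : Nontrivial M := h.nontrivial
  have hmem : ∀ r ∈ rs ++ [y], r ∈ maximalIdeal A :=
    fun r hr => (List.mem_append.mp hr).elim (h.mem_maximalIdeal r)
      fun hr => List.mem_singleton.mp hr ▸ hy
  have hext : IsRegular M (rs ++ [y]) :=
    (isRegular_iff_isWeaklyRegular_of_subset_maximalIdeal hmem).mpr <|
      (isWeaklyRegular_append_iff M rs [y]).mpr
        ⟨h.toIsWeaklyRegular, (isWeaklyRegular_singleton_iff _ y).mpr hreg⟩
  have : ((rs ++ [y]).length : ℕ∞) ≤ moduleDepth A M := le_sSup ⟨_, rfl, hmem, hext⟩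
  rw [← hlen, List.length_append, List.length_singleton, Nat.cast_le] at this
  omega

lemma maximalIdeal_mem_associatedPrimes_of_length_eq_moduleDepth [IsNoetherianRing A]
    {rs : List A} (h : IsRegular M rs) (hlen : (rs.length : ℕ∞) = moduleDepth A M) :
    maximalIdeal A ∈ associatedPrimes A (M ⧸ Ideal.ofList rs • (⊤ : Submodule A M)) := by
  obtain ⟨p, hp, hle⟩ := exists_le_mem_associatedPrimes_of_forall_not_isSMulRegular
    fun y hy => not_isSMulRegular_of_length_eq_moduleDepth h hlen hy
  rwa [(maximalIdeal.isMaximal A).eq_of_le hp.isPrime.ne_top hle]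

end LocalRing

lemma mem_associatedPrimes_of_maximalIdeal_mem_associatedPrimes_atPrime {R : Type*} [CommRing R]
    [IsNoetherianRing R] (P : Ideal R) [P.IsPrime] (J : Ideal R)
    (h : maximalIdeal (Localization.AtPrime P) ∈ associatedPrimes (Localization.AtPrime P)
      (Localization.AtPrime P ⧸ J.map (algebraMap R (Localization.AtPrime P)))) :
    P ∈ associatedPrimes R (R ⧸ J) := by
  have hloc : J.map (algebraMap R _) = J.localized' (Localization.AtPrime P) P.primeCompl
      (Algebra.linearMap R (Localization.AtPrime P)) := by
    rw [Submodule.localized'_eq_span]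
    rfl
  have h' : maximalIdeal (Localization.AtPrime P) ∈ associatedPrimes (Localization.AtPrime P)
      (Localization.AtPrime P ⧸ J.localized' (Localization.AtPrime P) P.primeCompl
        (Algebra.linearMap R (Localization.AtPrime P))) := by
    rwa [← hloc]
  have := Module.associatedPrimes.comap_mem_associatedPrimes_of_mem_associatedPrimes_of_isLocalizedModule_of_fg
    P.primeCompl (J.toLocalizedQuotient' (Localization.AtPrime P) P.primeCompl
      (Algebra.linearMap R (Localization.AtPrime P))) _ h'
    (IsNoetherian.noetherian _)
  rwa [← Ideal.under, Localization.AtPrime.under_maximalIdeal] at this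

/-- If `I ⊊ R` is an ideal of a Noetherian ring with `grade(I) = d`, then
there are only finitely many primes `P ⊇ I` with `depth R_P = d`. -/
theorem finite_primes_of_depth_eq_grade {R : Type u} [CommRing R] [IsNoetherianRing R]
    (I : Ideal R) (hI : I ≠ ⊤) (d : ℕ) (hgrade : idealGrade R I = (d : ℕ∞)) :
    {P : Ideal R | ∃ hP : P.IsPrime, I ≤ P ∧ primeDepth R P hP = (d : ℕ∞)}.Finite := by
  obtain ⟨xs, hlen, hxsI, hxs⟩ := exists_isRegular_of_le_idealGrade hI hgrade.ge
  refine (associatedPrimes.finite R (R ⧸ Ideal.ofList xs)).subset ?_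
  rintro P ⟨hP, hIP, hdepth⟩
  have hreg := hxs.1.isRegular_of_isLocalization_of_mem (Localization.AtPrime P) P
    fun r hr => hIP (hxsI r hr)
  refine mem_associatedPrimes_of_maximalIdeal_mem_associatedPrimes_atPrime P _ ?_
  have := maximalIdeal_mem_associatedPrimes_of_length_eq_moduleDepth hreg
    (by rw [List.length_map, hlen]; exact hdepth.symm)
  rwa [Ideal.smul_eq_mul, Ideal.mul_top, ← Ideal.map_ofList] at this
end

section
/- Finite shrinking lemma, local algebra version for one point: Let $(R, \mathfrak{m}, K)$ be a local ring, $M$ a finitely generated $R$-module, and $s_1, \dots, s_u \in M$ with $u > w \geq 0$ such that the submodule $(s_1, \dots, s_u)$ is $w$-basic in $M$ (i.e., $\mu(M/(s_1,\dots,s_u)) \leq \mu(M) - w$). Then there exist $r_2, \dots, r_u \in R$ such that the submodule $(s_2 + r_2 s_1, \dots, s_u + r_u s_1)$ is $w$-basic in $M$, where moreover each $r_j$ can be chosen to be $0$ or $1$. -/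
/-- The minimal number of generators of a module. -/
noncomputable def minGens (R M : Type*) [Semiring R] [AddCommMonoid M] [Module R M] : ℕ :=
  sInf {n : ℕ | ∃ s : Finset M, s.card = n ∧ Submodule.span R (s : Set M) = ⊤}

/-!
By Nakayama's lemma, `μ(M ⧸ N) = dim_k (k ⊗ M) - dim_k (image of N)` over a local ring with residue
field `k`, so whether `(s₂ + r₂ s₁, …, s_u + r_u s₁)` is `w`-basic only depends on the `k`-span of
the images of its generators in `k ⊗ M`. If the images of `s₂, …, s_u` are linearly independent,
they already span `u - 1 ≥ w` dimensions and all `r_j = 0` work. Otherwise the image of some `s_l`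
lies in the span of the others; then replacing `s_l` by `s_l + s₁` brings the image of `s₁` into
the span, which becomes the span of the images of all of `s₁, …, s_u`.
-/

open IsLocalRing TensorProduct Submodule Module

theorem minGens_eq_spanFinrank_top (R M : Type*) [Semiring R] [AddCommMonoid M] [Module R M] :
    minGens R M = (⊤ : Submodule R M).spanFinrank := by
  rw [spanFinrank_eq_iInf, minGens, iInf]
  congr
  ext n
  simp [and_comm, eq_comm]

theorem span_image_update_add_eq_span_image_insert {A V ι : Type*} [Ring A] [AddCommGroup V]
    [Module A V] [DecidableEq ι] (v : ι → V) (i₀ : ι) {T : Set ι} {l : ι} (hl : l ∈ T)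
    (hdep : v l ∈ span A (v '' (T \ {l}))) :
    span A (Function.update v l (v l + v i₀) '' T) = span A (v '' insert i₀ T) := by
  set W := span A (Function.update v l (v l + v i₀) '' T)
  have hmem : ∀ i ∈ T, Function.update v l (v l + v i₀) i ∈ W :=
    fun i hi => subset_span ⟨i, hi, rfl⟩
  have hrest : v '' (T \ {l}) ⊆ W := by
    rintro _ ⟨i, ⟨hi, hil⟩, rfl⟩
    simpa [Function.update_of_ne hil] using hmem i hi
  have hvl : v l ∈ W := span_le.mpr hrest hdep
  have hvl₀ : v l + v i₀ ∈ W := by simpa using hmem l hl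
  have hv : ∀ i ∈ insert i₀ T, v i ∈ span A (v '' insert i₀ T) :=
    fun i hi => subset_span ⟨i, hi, rfl⟩
  refine le_antisymm (span_le.mpr ?_) (span_le.mpr ?_)
  · rintro _ ⟨i, hi, rfl⟩
    rcases eq_or_ne i l with rfl | hil
    · simpa using add_mem (hv i (Set.mem_insert_of_mem _ hi)) (hv i₀ (Set.mem_insert _ _))
    · simpa [Function.update_of_ne hil] using hv i (Set.mem_insert_of_mem _ hi)
  · rintro _ ⟨i, rfl | hi, rfl⟩
    · simpa using sub_mem hvl₀ hvl
    · rcases eq_or_ne i l with rfl | hil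
      · exact hvl
      · exact hrest ⟨i, ⟨hi, hil⟩, rfl⟩

theorem add_single_one_smul_eq_update {R M ι : Type*} [Semiring R] [AddCommMonoid M] [Module R M]
    [DecidableEq ι] (f : ι → M) (l : ι) (x : M) :
    (fun i => f i + (Pi.single l 1 : ι → R) i • x) = Function.update f l (f l + x) := by
  ext i
  rcases eq_or_ne i l with rfl | h <;> simp [*]

section LocalRing

variable {R M : Type*} [CommRing R] [IsLocalRing R] [AddCommGroup M] [Module R M]
  [Module.Finite R M]

local notation "k" => ResidueField R

theorem minGens_eq_finrank_residueField_tensorProduct :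
    minGens R M = finrank k (k ⊗[R] M) := by
  rw [minGens_eq_spanFinrank_top, ← spanFinrank_top_eq_of_residueField ⊤ Module.Finite.fg_top,
    ← finrank_eq_spanFinrank_of_free]
  exact ((Submodule.topEquiv (R := R) (M := M)).baseChange R k _ _).finrank_eq

theorem minGens_quotient_add_finrank_baseChange (N : Submodule R M) :
    minGens R (M ⧸ N) + finrank k (N.baseChange k) = minGens R M := by
  rw [minGens_eq_finrank_residueField_tensorProduct, minGens_eq_finrank_residueField_tensorProduct,
    (AlgebraTensorModule.tensorQuotientEquiv k R k N).finrank_eq]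
  exact Submodule.finrank_quotient_add_finrank _

variable (R) in
theorem minGens_quotient_span_image_add_finrank {ι : Type*} (f : ι → M) (S : Set ι) :
    minGens R (M ⧸ span R (f '' S)) + finrank k (span k ((mk R k M 1 ∘ f) '' S)) =
      minGens R M := by
  rw [Set.image_comp, ← baseChange_span]
  exact minGens_quotient_add_finrank_baseChange _

theorem minGens_quotient_span_image_add_ncard {ι : Type*} (f : ι → M) {S : Set ι}
    (hS : S.Finite) (hf : LinearIndepOn k (mk R k M 1 ∘ f) S) :
    minGens R (M ⧸ span R (f '' S)) + S.ncard = minGens R M := by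
  have := hS.fintype
  rw [← minGens_quotient_span_image_add_finrank R f S, Set.image_eq_range (mk R k M 1 ∘ f),
    finrank_span_eq_card hf, ← Nat.card_coe_set_eq, Nat.card_eq_fintype_card]

theorem minGens_quotient_span_image_update_add {ι : Type*} [DecidableEq ι] (f : ι → M) (i₀ : ι)
    {T : Set ι} {l : ι} (hl : l ∈ T)
    (hdep : mk R k M 1 (f l) ∈ span k ((mk R k M 1 ∘ f) '' (T \ {l}))) :
    minGens R (M ⧸ span R (Function.update f l (f l + f i₀) '' T)) =
      minGens R (M ⧸ span R (f '' insert i₀ T)) := by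
  have hspan : span k ((mk R k M 1 ∘ Function.update f l (f l + f i₀)) '' T) =
      span k ((mk R k M 1 ∘ f) '' insert i₀ T) := by
    rw [Function.comp_update, map_add]
    exact span_image_update_add_eq_span_image_insert _ i₀ hl hdep
  have hnew := minGens_quotient_span_image_add_finrank R (Function.update f l (f l + f i₀)) T
  have hold := minGens_quotient_span_image_add_finrank R f (insert i₀ T)
  rw [hspan] at hnew
  omega

end LocalRing

/-- Finite shrinking lemma, local one-point version. If the submodule
generated by `s 0, …, s (u-1)` is `w`-basic in `M` with `u > w`, then one can modify
`s 1, …, s (u-1)` by multiples (with coefficients `0` or `1`) of `s 0` so that the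
submodule they generate is still `w`-basic in `M`. -/
theorem finite_shrinking_local {R M : Type*} [CommRing R] [IsLocalRing R]
    [AddCommGroup M] [Module R M] [Module.Finite R M]
    (u w : ℕ) (hw : w < u) (s : Fin u → M)
    (hbasic : minGens R (M ⧸ Submodule.span R (Set.range s)) ≤ minGens R M - w) :
    ∃ r : Fin u → R, (∀ i, r i = 0 ∨ r i = 1) ∧
      minGens R (M ⧸ Submodule.span R
        ((fun i => s i + r i • s (⟨0, by omega⟩ : Fin u)) ''
          {i : Fin u | i ≠ (⟨0, by omega⟩ : Fin u)})) ≤ minGens R M - w := by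
  set i₀ : Fin u := ⟨0, by omega⟩
  set T : Set (Fin u) := {i | i ≠ i₀}
  by_cases hind : LinearIndepOn (ResidueField R) (mk R (ResidueField R) M 1 ∘ s) T
  · refine ⟨0, fun _ => Or.inl rfl, ?_⟩
    have hcard : T.ncard = u - 1 := by simp [T, Set.ncard_eq_toFinset_card', Finset.filter_ne']
    have hquot := minGens_quotient_span_image_add_ncard s T.toFinite hind
    have hzero : (fun i => s i + (0 : Fin u → R) i • s i₀) = s := by ext; simp
    rw [hzero]
    omega
  · obtain ⟨l, hlT, hl⟩ :
        ∃ l ∈ T, mk R (ResidueField R) M 1 (s l) ∈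
          span (ResidueField R) ((mk R (ResidueField R) M 1 ∘ s) '' (T \ {l})) := by
      simpa [linearIndepOn_iff_notMem_span] using hind
    refine ⟨Pi.single l 1, fun i => ?_, ?_⟩
    · rcases eq_or_ne i l with rfl | h <;> simp [*]
    have hT : insert i₀ T = Set.univ := by ext i; simp [T, eq_or_ne]
    rwa [add_single_one_smul_eq_update, minGens_quotient_span_image_update_add s i₀ hlT hl, hT,
      Set.image_univ]
end

section
/- Let $K$ be a field, $V$ a $K$-vector space, and $v_1, \dots, v_u \in V$ with $u \geq 2$. If $\dim \operatorname{span}\{v_2, \dots, v_u\} < \dim \operatorname{span}\{v_1, \dots, v_u\}$ and $\{v_2, \dots, v_u\}$ is linearly dependent, then there exists $l$ with $2 \leq l \leq u$ such that $v_l \in \operatorname{span}\{v_{l+1}, \dots, v_u\}$ and $\dim \operatorname{span}\{v_2, \dots, v_{l-1}, v_l + v_1, v_{l+1}, \dots, v_u\} = \dim \operatorname{span}\{v_2, \dots, v_u\} + 1$. -/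
/-!
Since `v 1` lies outside `W = span {v 2, …, v u}`, a dependent family `v 2, …, v u` has some
`v l` in the span of the later vectors (otherwise, adding the vectors from the back one at a
time, the family would be independent). Removing `v l` does not change `W`, and
`v l + v 1 ∉ W`, so replacing `v l` by `v l + v 1` spans `W ⊕ K (v l + v 1)`.
-/

open Submodule Module Set

section

variable {K V : Type*} [Field K] [AddCommGroup V] [Module K V]

theorem finrank_span_insert_of_notMem_span {s : Set V} (hs : s.Finite) {x : V}
    (hx : x ∉ span K s) :
    finrank K (span K (insert x s)) = finrank K (span K s) + 1 := by
  have := FiniteDimensional.span_of_finite K hs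
  have hx0 : x ≠ 0 := fun h => hx (h ▸ zero_mem _)
  have h := finrank_sup_add_finrank_inf_eq (span K s) (K ∙ x)
  rw [(disjoint_span_singleton_of_notMem hx).eq_bot, finrank_bot, add_zero,
    finrank_span_singleton hx0] at h
  rw [span_insert, sup_comm, h]

theorem exists_mem_span_image_inter_Ioi_of_not_linearIndepOn {ι : Type*} [LinearOrder ι]
    {v : ι → V} (s : Finset ι) (hdep : ¬ LinearIndepOn K v (s : Set ι)) :
    ∃ l ∈ s, v l ∈ span K (v '' (↑s ∩ Ioi l)) := by
  classical
  contrapose! hdep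
  induction s using Finset.induction_on_min with
  | empty => simp
  | insert a s hlt ih =>
    have hs : (↑s : Set ι) ∩ Ioi a = ↑s := inter_eq_left.2 hlt
    rw [Finset.coe_insert, linearIndepOn_insert fun ha => (hlt a ha).false]
    refine ⟨ih fun l hl => ?_, ?_⟩
    · refine fun hmem => hdep l (Finset.mem_insert_of_mem hl) (span_mono ?_ hmem)
      gcongr
      exact Finset.coe_subset.2 (Finset.subset_insert a s)
    · simpa [Finset.coe_insert, insert_inter_of_notMem, hs] using
        hdep a (Finset.mem_insert_self a s)

theorem finrank_span_image_ite_add_of_notMem {ι : Type*} [DecidableEq ι] {v : ι → V}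
    {s : Set ι} (hs : s.Finite) {l : ι} (hl : l ∈ s) (hvl : v l ∈ span K (v '' (s \ {l})))
    {x : V} (hx : x ∉ span K (v '' s)) :
    finrank K (span K ((fun i => if i = l then v l + x else v i) '' s)) =
      finrank K (span K (v '' s)) + 1 := by
  have hs_eq : s = insert l (s \ {l}) := (insert_sdiff_self_of_mem hl).symm
  have hspan : span K (v '' (s \ {l})) = span K (v '' s) := by
    conv_rhs => rw [hs_eq, image_insert_eq, span_insert_eq_span hvl]
  have himage : (fun i => if i = l then v l + x else v i) '' s =
      insert (v l + x) (v '' (s \ {l})) := by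
    conv_lhs => rw [hs_eq, image_insert_eq]
    rw [if_pos rfl, image_congr fun i hi => if_neg hi.2]
  have hnotMem : v l + x ∉ span K (v '' (s \ {l})) := by
    rwa [hspan, Submodule.add_mem_iff_right _ (hspan ▸ hvl)]
  rw [himage, finrank_span_insert_of_notMem_span (hs.sdiff.image v) hnotMem, hspan]

end

/-- If dropping `v 1` strictly decreases the span of `v 1, …, v u` and
`v 2, …, v u` are linearly dependent, then there is `l` with `2 ≤ l ≤ u` such that
`v l` lies in the span of the later vectors and replacing `v l` by `v l + v 1`
increases the dimension of the span by one. -/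
theorem exists_index_span_dim_succ {K V : Type*} [Field K] [AddCommGroup V] [Module K V]
    (u : ℕ) (hu : 2 ≤ u) (v : ℕ → V)
    (hlt : Module.finrank K ↥(Submodule.span K (v '' Set.Icc 2 u)) <
      Module.finrank K ↥(Submodule.span K (v '' Set.Icc 1 u)))
    (hdep : ¬ LinearIndependent K (fun i : (Set.Icc 2 u) => v i)) :
    ∃ l, 2 ≤ l ∧ l ≤ u ∧ v l ∈ Submodule.span K (v '' Set.Icc (l + 1) u) ∧
      Module.finrank K ↥(Submodule.span K
          ((fun i => if i = l then v l + v 1 else v i) '' Set.Icc 2 u)) =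
        Module.finrank K ↥(Submodule.span K (v '' Set.Icc 2 u)) + 1 := by
  have hv1 : v 1 ∉ span K (v '' Icc 2 u) := by
    intro hmem
    have hIcc : Icc 1 u = insert 1 (Icc 2 u) := by
      ext i; simp only [mem_Icc, mem_insert_iff]; omega
    rw [hIcc, image_insert_eq, span_insert_eq_span hmem] at hlt
    exact hlt.false
  obtain ⟨l, hl, hvl⟩ := exists_mem_span_image_inter_Ioi_of_not_linearIndepOn (K := K) (v := v)
    (Finset.Icc 2 u) (by rwa [Finset.coe_Icc])
  rw [Finset.mem_Icc] at hl
  have hlater : Icc 2 u ∩ Ioi l = Icc (l + 1) u := by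
    ext i; simp only [mem_inter_iff, mem_Icc, mem_Ioi]; omega
  rw [Finset.coe_Icc, hlater] at hvl
  have hlater_sub : Icc (l + 1) u ⊆ Icc 2 u \ {l} := fun i hi => by
    simp only [mem_Icc, mem_sdiff, mem_singleton_iff] at hi ⊢; omega
  exact ⟨l, hl.1, hl.2, hvl, finrank_span_image_ite_add_of_notMem (finite_Icc 2 u) hl
    (span_mono (image_mono hlater_sub) hvl) hv1⟩
end
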